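/- If A and B are distinct submodules of M both of degree 1 in the proper sum-essential graph N(M) and A ∩ B = 0, then A and B are non-isomorphic simple modules. -/

import Mathlib

/-!
Neighbours in `N(M)` come from complements (maximal disjoint submodules): if `Z` is a complement
of `V ⊕ Y`, then `Y ⊕ Z` is a neighbour of `V`; if `Z` is a complement of a nonzero `X ≤ A`, then
`Z` is a neighbour of `A`. Hence, when `A` has a single neighbour `C`, relative complements of `A`
are unique, `A ⊓ C = 0`, and `C` contains everything disjoint from a nonzero `X ≤ A`.
An isomorphism `f : A ≅ B` would give a second relative complement `{a + f a}` of `A` in `A ⊕ B`.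
If `0 < X < A`, the neighbour of `B` contains `A` and is of the form `X ⊕ Z` with `Z ≤ C`, so the
modular law gives `A = X`.
-/

variable {R : Type*} [Ring R] {M : Type*} [AddCommGroup M] [Module R M]

/-- `N` is an essential submodule of `M`: it intersects every nonzero submodule nontrivially. -/
def IsEssentialSubmodule (N : Submodule R M) : Prop :=
  ∀ B : Submodule R M, B ≠ ⊥ → N ⊓ B ≠ ⊥

/-- A vertex of the sum-essential graph `S(M)`: a nontrivial submodule. -/
def IsVertexS (N : Submodule R M) : Prop := N ≠ ⊥ ∧ N ≠ ⊤

/-- Adjacency in the sum-essential graph `S(M)`. -/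
def AdjS (A B : Submodule R M) : Prop :=
  IsVertexS A ∧ IsVertexS B ∧ A ≠ B ∧ IsEssentialSubmodule (A ⊔ B)

/-- A vertex of the proper sum-essential graph `N(M)`: a nontrivial non-essential submodule. -/
def IsVertexP (N : Submodule R M) : Prop :=
  N ≠ ⊥ ∧ N ≠ ⊤ ∧ ¬ IsEssentialSubmodule N

/-- Adjacency in the proper sum-essential graph `N(M)`. -/
def AdjP (A B : Submodule R M) : Prop :=
  IsVertexP A ∧ IsVertexP B ∧ A ≠ B ∧ IsEssentialSubmodule (A ⊔ B)

/-- `U` is a uniform submodule: nonzero, and any two nonzero submodules of it intersect. -/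
def UniformSubmodule (U : Submodule R M) : Prop :=
  U ≠ ⊥ ∧ ∀ A B : Submodule R M, A ≤ U → B ≤ U → A ≠ ⊥ → B ≠ ⊥ → A ⊓ B ≠ ⊥

/-- `C` is a complement of `U` in `M`: maximal with respect to `U ⊓ C = ⊥`. -/
def IsComplementOf (C U : Submodule R M) : Prop :=
  U ⊓ C = ⊥ ∧ ∀ D : Submodule R M, U ⊓ D = ⊥ → C ≤ D → D = C

theorem not_isEssentialSubmodule_of_disjoint {N D : Submodule R M} (hD : D ≠ ⊥)
    (hND : Disjoint N D) : ¬ IsEssentialSubmodule N :=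
  fun hN => hN D hD hND.eq_bot

theorem IsEssentialSubmodule.mono {N N' : Submodule R M} (hN : IsEssentialSubmodule N)
    (hle : N ≤ N') : IsEssentialSubmodule N' :=
  fun D hD hN'D => hN D hD (le_bot_iff.mp (hN'D ▸ inf_le_inf_right D hle))

theorem exists_isComplementOf_ge {K D : Submodule R M} (hKD : Disjoint K D) :
    ∃ Z, D ≤ Z ∧ IsComplementOf Z K := by
  have hchain : ∀ c ⊆ {Z : Submodule R M | Disjoint K Z}, IsChain (· ≤ ·) c → ∀ y ∈ c,
      ∃ ub ∈ {Z : Submodule R M | Disjoint K Z}, ∀ z ∈ c, z ≤ ub :=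
    fun c hc hchain y hy => ⟨sSup c,
      ((hchain.directedOn).disjoint_sSup_right).mpr fun _ hz => hc hz, fun _ hz => le_sSup hz⟩
  obtain ⟨Z, hDZ, hZ, hmax⟩ := zorn_le_nonempty₀ _ hchain D hKD
  exact ⟨Z, hDZ, hZ.eq_bot, fun D hKD hZD => le_antisymm (hmax (disjoint_iff.mpr hKD) hZD) hZD⟩

theorem IsComplementOf.disjoint {Z K : Submodule R M} (hZ : IsComplementOf Z K) :
    Disjoint K Z :=
  disjoint_iff.mpr hZ.1

theorem IsComplementOf.isEssentialSubmodule_sup {Z K : Submodule R M}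
    (hZ : IsComplementOf Z K) : IsEssentialSubmodule (K ⊔ Z) := by
  intro W hW hKZW
  have hZW : Z ⊔ W = Z :=
    hZ.2 _ (hZ.disjoint.disjoint_sup_right_of_disjoint_sup_left (disjoint_iff.mpr hKZW)).eq_bot
      le_sup_left
  have hWZ : W ≤ K ⊔ Z := (hZW ▸ le_sup_right : W ≤ Z).trans le_sup_right
  exact hW (le_bot_iff.mp (hKZW ▸ le_inf hWZ le_rfl))

theorem adjP_of_disjoint {V W : Submodule R M} (hV : V ≠ ⊥) (hW : W ≠ ⊥) (hVW : Disjoint V W)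
    (hess : IsEssentialSubmodule (V ⊔ W)) : AdjP V W := by
  have hWV : Disjoint W V := hVW.symm
  refine ⟨⟨hV, fun h => hW ?_, not_isEssentialSubmodule_of_disjoint hW hVW⟩,
    ⟨hW, fun h => hV ?_, not_isEssentialSubmodule_of_disjoint hV hWV⟩,
    fun h => hV (disjoint_self.mp (h ▸ hVW)), hess⟩
  · exact disjoint_top.mp (h ▸ hWV)
  · exact disjoint_top.mp (h ▸ hVW)

theorem adjP_sup_of_isComplementOf {V Y Z : Submodule R M} (hV : V ≠ ⊥) (hY : Y ≠ ⊥)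
    (hVY : Disjoint V Y) (hZ : IsComplementOf Z (V ⊔ Y)) : AdjP V (Y ⊔ Z) :=
  adjP_of_disjoint hV (fun h => hY (le_bot_iff.mp (h ▸ le_sup_left)))
    (hVY.disjoint_sup_right_of_disjoint_sup_left hZ.disjoint)
    (sup_assoc V Y Z ▸ hZ.isEssentialSubmodule_sup)

theorem adjP_of_isComplementOf {A X Z : Submodule R M} (hA : IsVertexP A) (hXA : X ≤ A)
    (hX : X ≠ ⊥) (hZ : IsComplementOf Z X) : AdjP A Z := by
  have hess : IsEssentialSubmodule (A ⊔ Z) :=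
    hZ.isEssentialSubmodule_sup.mono (sup_le_sup_right hXA Z)
  refine ⟨hA, ⟨fun h => hA.2.2 ?_, fun h => hX ?_,
    not_isEssentialSubmodule_of_disjoint hX hZ.disjoint.symm⟩, fun h => hX ?_, hess⟩
  · exact hZ.isEssentialSubmodule_sup.mono (by simpa [h] using hXA)
  · exact disjoint_top.mp (h ▸ hZ.disjoint)
  · exact disjoint_self.mp (hZ.disjoint.mono_right (h ▸ hXA))

theorem le_of_existsUnique_adjP {A C X D : Submodule R M} (hA : ∃! C, AdjP A C)
    (hC : AdjP A C) (hXA : X ≤ A) (hX : X ≠ ⊥) (hXD : Disjoint X D) : D ≤ C := by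
  obtain ⟨Z, hDZ, hZ⟩ := exists_isComplementOf_ge hXD
  exact hA.unique (adjP_of_isComplementOf hC.1 hXA hX hZ) hC ▸ hDZ

theorem disjoint_of_existsUnique_adjP {A C : Submodule R M} (hA : ∃! C, AdjP A C)
    (hC : AdjP A C) : Disjoint A C := by
  obtain ⟨Z, -, hZ⟩ := exists_isComplementOf_ge (disjoint_bot_right (a := A))
  exact hA.unique (adjP_of_isComplementOf hC.1 le_rfl hC.1.1 hZ) hC ▸ hZ.disjoint

theorem sup_inf_eq_of_le_of_disjoint {α : Type*} [Lattice α] [OrderBot α] [IsModularLattice α]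
    {a b c : α} (hac : a ≤ c) (hbc : Disjoint b c) : (a ⊔ b) ⊓ c = a := by
  rw [sup_inf_assoc_of_le b hac, hbc.eq_bot, sup_bot_eq]

theorem eq_of_existsUnique_adjP {A D₁ D₂ : Submodule R M} (hA : ∃! C, AdjP A C)
    (hD₁ : D₁ ≠ ⊥) (h₁ : Disjoint A D₁) (h₂ : Disjoint A D₂)
    (hsup : A ⊔ D₁ = A ⊔ D₂) : D₁ = D₂ := by
  obtain ⟨C, hC⟩ := hA.exists
  have hD₂ : D₂ ≠ ⊥ := by
    rintro rfl
    exact hD₁ (h₁.eq_bot_of_ge (le_sup_right.trans (hsup.trans (sup_bot_eq A)).le))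
  obtain ⟨Z, -, hZ⟩ := exists_isComplementOf_ge (disjoint_bot_right (a := A ⊔ D₁))
  have hZ₂ : IsComplementOf Z (A ⊔ D₂) := hsup ▸ hZ
  have hDZ : D₁ ⊔ Z = D₂ ⊔ Z :=
    hA.unique (adjP_sup_of_isComplementOf hC.1.1 hD₁ h₁ hZ)
      (adjP_sup_of_isComplementOf hC.1.1 hD₂ h₂ hZ₂)
  calc D₁ = (D₁ ⊔ Z) ⊓ (A ⊔ D₁) :=
        (sup_inf_eq_of_le_of_disjoint le_sup_right hZ.disjoint.symm).symm
    _ = (D₂ ⊔ Z) ⊓ (A ⊔ D₂) := by rw [hDZ, hsup]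
    _ = D₂ := sup_inf_eq_of_le_of_disjoint le_sup_right hZ₂.disjoint.symm

theorem isAtom_of_existsUnique_adjP {A B : Submodule R M} (hA : ∃! C, AdjP A C)
    (hB : ∃! C, AdjP B C) (hAB : Disjoint A B) : IsAtom A := by
  obtain ⟨C, hC⟩ := hA.exists
  obtain ⟨C', hC'⟩ := hB.exists
  have hAC' : A ≤ C' := le_of_existsUnique_adjP hB hC' le_rfl hC'.1.1 hAB.symm
  refine ⟨hC.1.1, fun X hXA => by_contra fun hX => hXA.ne' ?_⟩
  obtain ⟨Z, -, hZ⟩ := exists_isComplementOf_ge (disjoint_bot_right (a := B ⊔ X))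
  have hXZ : X ⊔ Z = C' :=
    hB.unique (adjP_sup_of_isComplementOf hC'.1.1 hX (hAB.symm.mono_right hXA.le) hZ) hC'
  have hZC : Z ≤ C :=
    le_of_existsUnique_adjP hA hC hXA.le hX (hZ.disjoint.mono_left le_sup_right)
  have hZA : Disjoint Z A := ((disjoint_of_existsUnique_adjP hA hC).mono_right hZC).symm
  calc A = (X ⊔ Z) ⊓ A := (inf_eq_right.mpr (hXZ ▸ hAC')).symm
    _ = X := sup_inf_eq_of_le_of_disjoint hXA.le hZA

def sumGraph {A B : Submodule R M} (f : A →ₗ[R] B) : Submodule R M :=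
  LinearMap.range (A.subtype + B.subtype ∘ₗ f)

theorem mem_sumGraph {A B : Submodule R M} {f : A →ₗ[R] B} {x : M} :
    x ∈ sumGraph f ↔ ∃ a : A, (a : M) + f a = x :=
  Iff.rfl

theorem disjoint_sumGraph_left {A B : Submodule R M} (hAB : Disjoint A B) {f : A →ₗ[R] B}
    (hf : Function.Injective f) : Disjoint A (sumGraph f) := by
  refine Submodule.disjoint_def.mpr fun x hxA hx => ?_
  obtain ⟨a, rfl⟩ := mem_sumGraph.mp hx
  have hfa : f a = 0 :=
    Subtype.ext (Submodule.disjoint_def.mp hAB _ (by simpa using sub_mem hxA a.2) (f a).2)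
  simp [(map_eq_zero_iff f hf).mp hfa]

theorem disjoint_sumGraph_right {A B : Submodule R M} (hAB : Disjoint A B) (f : A →ₗ[R] B) :
    Disjoint B (sumGraph f) := by
  refine Submodule.disjoint_def.mpr fun x hxB hx => ?_
  obtain ⟨a, rfl⟩ := mem_sumGraph.mp hx
  have ha : a = 0 :=
    Subtype.ext (Submodule.disjoint_def.mp hAB _ a.2 (by simpa using sub_mem hxB (f a).2))
  simp [ha]

theorem sup_sumGraph {A B : Submodule R M} {f : A →ₗ[R] B} (hf : Function.Surjective f) :
    A ⊔ sumGraph f = A ⊔ B := by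
  refine le_antisymm (sup_le le_sup_left ?_) (sup_le le_sup_left fun b hb => ?_)
  · rintro _ ⟨a, rfl⟩
    exact add_mem (Submodule.mem_sup_left a.2) (Submodule.mem_sup_right (f a).2)
  · obtain ⟨a, ha⟩ := hf ⟨b, hb⟩
    have hb : b = ((a : M) + f a) - a := by simp [ha]
    exact hb ▸ sub_mem (Submodule.mem_sup_right (mem_sumGraph.mpr ⟨a, rfl⟩))
      (Submodule.mem_sup_left a.2)

theorem stmt14_general (A B : Submodule R M)
    (hA : ∃! C, AdjP A C) (hB : ∃! C, AdjP B C) (hdisj : A ⊓ B = ⊥) :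
    IsAtom A ∧ IsAtom B ∧ IsEmpty (↥A ≃ₗ[R] ↥B) := by
  have hAB : Disjoint A B := disjoint_iff.mpr hdisj
  refine ⟨isAtom_of_existsUnique_adjP hA hB hAB, isAtom_of_existsUnique_adjP hB hA hAB.symm,
    ⟨fun f => ?_⟩⟩
  obtain ⟨C, hC⟩ := hB.exists
  have hBΔ : B = sumGraph (f : A →ₗ[R] B) :=
    eq_of_existsUnique_adjP hA hC.1.1 hAB (disjoint_sumGraph_left hAB f.injective)
      (sup_sumGraph f.surjective).symm
  have hBB : Disjoint B B := by
    nth_rewrite 2 [hBΔ]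
    exact disjoint_sumGraph_right hAB _
  exact hC.1.1 (disjoint_self.mp hBB)

/-- If `A ≠ B` both have degree 1 in `N(M)` and `A ∩ B = 0`, then
`A` and `B` are non-isomorphic simple modules. -/
theorem stmt14 (A B : Submodule R M) (hAB : A ≠ B)
    (hA : ∃! C, AdjP A C) (hB : ∃! C, AdjP B C) (hdisj : A ⊓ B = ⊥) :
    IsAtom A ∧ IsAtom B ∧ IsEmpty (↥A ≃ₗ[R] ↥B) :=
  stmt14_general A B hA hB hdisj
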